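/- arXiv:1909.06882 — 7 statements merged into one kernel-verified Lean document; each statement's English description precedes it below -/
import Mathlib

section
/- Let F be a division ring, α ∈ F, and f, g ∈ F[z]. If f^r(α) = 0, then (gf)^r(α) = 0; if f^r(α) ≠ 0, then (gf)^r(α) = g^r(f^r(α) α f^r(α)⁻¹) · f^r(α). -/
open Polynomial

/-- Left evaluation of a polynomial `f = Σ zʲ fⱼ` at `a`: `f^ℓ(a) = Σ aʲ fⱼ`.
(Mathlib's `Polynomial.eval` is the right evaluation `Σ fⱼ aʲ`.) -/
noncomputable def lEval {F : Type*} [DivisionRing F] (a : F) (f : F[X]) : F :=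
  f.sum fun j c => a ^ j * c

/-!
Right evaluation is additive in `g`, and for a monomial `g = a zⁿ` one has
`(g f)^r(α) = a · f^r(α) · αⁿ`. So `(g f)^r(α)` vanishes with `f^r(α)`, and when `u = f^r(α)` is
invertible, `u αⁿ = (u α u⁻¹)ⁿ u` turns the sum into `g^r(u α u⁻¹) · u`.
-/

namespace Polynomial

variable {R : Type*} [Semiring R]

theorem eval_monomial_mul (α a : R) (n : ℕ) (p : R[X]) :
    (monomial n a * p).eval α = a * p.eval α * α ^ n := by
  rw [← C_mul_X_pow_eq_monomial, mul_assoc, eval_C_mul, X_pow_mul, eval_mul_X_pow, mul_assoc]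

theorem eval_mul_eq_zero_of_eval_eq_zero {α : R} {f : R[X]} (hf : f.eval α = 0) (g : R[X]) :
    (g * f).eval α = 0 := by
  induction g using Polynomial.induction_on' with
  | add p q hp hq => rw [add_mul, eval_add, hp, hq, add_zero]
  | monomial n a => rw [eval_monomial_mul, hf, mul_zero, zero_mul]

theorem eval_mul_eq_eval_conj_mul {α : R} {f : R[X]} {u : Rˣ} (hf : f.eval α = u) (g : R[X]) :
    (g * f).eval α = g.eval (u * α * ↑u⁻¹) * u := by
  induction g using Polynomial.induction_on' with
  | add p q hp hq => rw [add_mul, eval_add, hp, hq, eval_add, add_mul]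
  | monomial n a =>
    rw [eval_monomial_mul, eval_monomial, hf, Units.conj_pow, mul_assoc a, mul_assoc a,
      mul_assoc, Units.inv_mul, mul_one]

end Polynomial

/-- Right product formula: if f^r(α)=0 then (gf)^r(α)=0; otherwise
(gf)^r(α) = g^r(f^r(α) α f^r(α)⁻¹)·f^r(α). -/
theorem stmt3 {F : Type*} [DivisionRing F] (α : F) (f g : F[X]) :
    (f.eval α = 0 → (g * f).eval α = 0) ∧
    (f.eval α ≠ 0 →
      (g * f).eval α = g.eval (f.eval α * α * (f.eval α)⁻¹) * f.eval α) :=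
  ⟨fun hf ↦ eval_mul_eq_zero_of_eval_eq_zero hf g,
    fun hf ↦ eval_mul_eq_eval_conj_mul (u := Units.mk0 _ hf) rfl g⟩
end

section
/- For a division ring F, α, β ∈ F and f ∈ F[z], let L_α f denote the left quotient of f by z - α (so f = f^ℓ(α) + (z-α)·(L_α f)) and R_β f the right quotient (so f = f^r(β) + (R_β f)·(z-β)). Then (L_α f)^r(β) = (R_β f)^ℓ(α). -/
/-!
Divide `L_α f` on the right by `z - β` and `R_β f` on the left by `z - α`. This writes `f` in
two ways as a constant plus a linear term plus `(z - α) · s · (z - β)`, where the linear terms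
have `z`-coefficients `(L_α f)^r(β)` and `(R_β f)^ℓ(α)`. Since `z - α` and `z - β` are monic of
degree one, the difference of the two `s` would otherwise create degree `≥ 2`; so the two `s`
agree, and comparing the coefficients of `z` gives the claim.
-/

open Polynomial

theorem exists_eq_C_eval_add_mul_X_sub_C {R : Type*} [Ring R] (β : R) (g : R[X]) :
    ∃ s, g = C (g.eval β) + s * (X - C β) := by
  induction g using Polynomial.induction_on' with
  | add p q hp hq =>
    obtain ⟨s, hs⟩ := hp
    obtain ⟨t, ht⟩ := hq
    exact ⟨s + t, by rw [eval_add, C_add]; nth_rw 1 [hs, ht]; noncomm_ring⟩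
  | monomial n c =>
    refine ⟨C c * ∑ i ∈ Finset.range n, X ^ i * C β ^ (n - 1 - i), ?_⟩
    rw [mul_assoc, (commute_X (C β)).geom_sum₂_mul, eval_monomial, ← C_mul_X_pow_eq_monomial]
    simp only [C_mul, C_pow]
    noncomm_ring

section LeftEvaluation

variable {F : Type*} [DivisionRing F]

theorem lEval_add (a : F) (p q : F[X]) : lEval a (p + q) = lEval a p + lEval a q :=
  sum_add_index p q _ (fun _ => mul_zero _) fun _ _ _ => mul_add _ _ _

theorem lEval_monomial (a : F) (n : ℕ) (c : F) : lEval a (monomial n c) = a ^ n * c :=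
  sum_monomial_index c _ (mul_zero _)

theorem exists_eq_C_lEval_add_X_sub_C_mul (α : F) (g : F[X]) :
    ∃ t, g = C (lEval α g) + (X - C α) * t := by
  induction g using Polynomial.induction_on' with
  | add p q hp hq =>
    obtain ⟨s, hs⟩ := hp
    obtain ⟨t, ht⟩ := hq
    exact ⟨s + t, by rw [lEval_add, C_add]; nth_rw 1 [hs, ht]; noncomm_ring⟩
  | monomial n c =>
    refine ⟨(∑ i ∈ Finset.range n, X ^ i * C α ^ (n - 1 - i)) * C c, ?_⟩
    rw [← mul_assoc, (commute_X (C α)).mul_geom_sum₂, lEval_monomial,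
      ← C_mul_X_pow_eq_monomial, ← X_pow_mul_C]
    simp only [C_mul, C_pow]
    noncomm_ring

end LeftEvaluation

section NoZeroDivisors

variable {R : Type*} [Ring R] [NoZeroDivisors R] [Nontrivial R]

theorem eq_zero_of_natDegree_X_sub_C_mul_mul_X_sub_C_le_one {α β : R} {p : R[X]}
    (h : ((X - C α) * p * (X - C β)).natDegree ≤ 1) : p = 0 := by
  by_contra hp
  rw [natDegree_mul (mul_ne_zero (X_sub_C_ne_zero α) hp) (X_sub_C_ne_zero β),
    natDegree_mul (X_sub_C_ne_zero α) hp] at h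
  simp at h

theorem eq_of_C_add_X_sub_C_mul_eq {a b u v α β : R} {s t : R[X]}
    (h : C a + (X - C α) * (C u + s * (X - C β)) = C b + (C v + (X - C α) * t) * (X - C β)) :
    u = v := by
  have hlin : (X - C α) * (s - t) * (X - C β) =
      C b + C v * (X - C β) - C a - (X - C α) * C u := by
    rw [← sub_eq_zero] at h ⊢
    rw [← h]
    noncomm_ring
  have hst : s - t = 0 := by
    apply eq_zero_of_natDegree_X_sub_C_mul_mul_X_sub_C_le_one (α := α) (β := β)
    rw [hlin]
    compute_degree
  rw [hst, mul_zero, zero_mul] at hlin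
  simpa [coeff_X, sub_eq_zero, eq_comm] using congr_arg (coeff · 1) hlin

end NoZeroDivisors

/-- (L_α f)^r(β) = (R_β f)^ℓ(α), with L_α f and R_β f the left/right quotients
of f by z - α and z - β, characterized by their defining equations. -/
theorem stmt4 {F : Type*} [DivisionRing F] (α β : F) (f qL qR : F[X])
    (hL : f = C (lEval α f) + (X - C α) * qL)
    (hR : f = C (f.eval β) + qR * (X - C β)) :
    qL.eval β = lEval α qR := by
  obtain ⟨s, hs⟩ := exists_eq_C_eval_add_mul_X_sub_C β qL
  obtain ⟨t, ht⟩ := exists_eq_C_lEval_add_X_sub_C_mul α qR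
  have hf : C (lEval α f) + (X - C α) * (C (qL.eval β) + s * (X - C β)) =
      C (f.eval β) + (C (lEval α qR) + (X - C α) * t) * (X - C β) := by
    rw [← hs, ← ht]
    exact hL.symm.trans hR
  exact eq_of_C_add_X_sub_C_mul_eq hf
end

section
/- For a division ring F, any α, β ∈ F and any f ∈ F[z], the element ψ = (L_α f)^r(β) satisfies the Sylvester identity α·ψ − ψ·β = f^ℓ(α) − f^r(β). -/
open Polynomial

theorem Polynomial.eval_X_sub_C_mul {R : Type*} [Ring R] (a b : R) (q : R[X]) :
    ((X - C a) * q).eval b = q.eval b * b - a * q.eval b := by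
  rw [sub_mul, eval_sub, X_mul, eval_mul_X, eval_C_mul]

/-- The element ψ = (L_α f)^r(β) satisfies α·ψ − ψ·β = f^ℓ(α) − f^r(β). -/
theorem stmt5 {F : Type*} [DivisionRing F] (α β : F) (f q : F[X])
    (hq : f = C (lEval α f) + (X - C α) * q) :
    α * q.eval β - q.eval β * β = lEval α f - f.eval β := by
  have hf : f.eval β = lEval α f + (q.eval β * β - α * q.eval β) := by
    conv_lhs => rw [hq]
    rw [eval_add, eval_C, eval_X_sub_C_mul]
  rw [hf]
  abel
end

section
/- Let F be a division ring, α ∈ F, f, g ∈ F[z]. If g^ℓ(α) = 0 then L_α(gf) = (L_α g)·f. If g^ℓ(α) ≠ 0, then L_α(gf) = (L_α g)·f + g^ℓ(α)·(L_{α̃} f), where α̃ = g^ℓ(α)⁻¹ α g^ℓ(α). -/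
open Polynomial

/-!
With `a = g^ℓ(α)`, write `g = C a + (z - α) qg` and `f = C b + (z - α̃) qf`. Since `a α̃ = α a`, the constant `C a`
can be moved across the linear factor, `C a (z - α̃) = (z - α) C a`, so that
`g f = C (a b) + (z - α) (qg f + C a qf)`; the left quotient by the monic `z - α` is unique.
When `a = 0` the term `C a · f` vanishes and no decomposition of `f` is needed.
-/

namespace Polynomial

variable {R : Type*} [Ring R]

theorem divByMonic_X_sub_C_eq_of_eq_C_add [Nontrivial R] {a α : R} {f q : R[X]}
    (h : f = C a + (X - C α) * q) : f /ₘ (X - C α) = q :=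
  (div_modByMonic_unique q (C a) (monic_X_sub_C α)
    ⟨h.symm, degree_C_le.trans_lt (by rw [degree_X_sub_C]; exact WithBot.coe_lt_coe.2 one_pos)⟩).1

theorem semiconjBy_C_X_sub_C {a α β : R} (h : SemiconjBy a β α) :
    SemiconjBy (C a) (X - C β) (X - C α) :=
  SemiconjBy.sub_right (commute_X (C a)).symm (h.map C)

theorem mul_eq_C_add_X_sub_C_mul {a b α β : R} {f g qf qg : R[X]}
    (hg : g = C a + (X - C α) * qg) (hf : f = C b + (X - C β) * qf) (h : SemiconjBy a β α) :
    g * f = C (a * b) + (X - C α) * (qg * f + C a * qf) := by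
  calc g * f = C a * f + (X - C α) * (qg * f) := by rw [hg, add_mul, mul_assoc]
    _ = C (a * b) + (C a * (X - C β)) * qf + (X - C α) * (qg * f) := by
        nth_rewrite 1 [hf]
        rw [mul_add, ← C_mul, mul_assoc]
    _ = C (a * b) + (X - C α) * (qg * f + C a * qf) := by
        rw [(semiconjBy_C_X_sub_C h).eq, mul_assoc, mul_add (X - C α)]
        abel

end Polynomial

/-- Product rule for the left backward shift L_α: if g^ℓ(α)=0 then L_α(gf) = (L_α g)·f;
if g^ℓ(α)≠0 then L_α(gf) = (L_α g)·f + g^ℓ(α)·(L_{α̃} f) with α̃ = g^ℓ(α)⁻¹ α g^ℓ(α). -/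
theorem stmt6 {F : Type*} [DivisionRing F] (α : F) (f g qg qgf : F[X])
    (hg : g = C (lEval α g) + (X - C α) * qg)
    (hgf : g * f = C (lEval α (g * f)) + (X - C α) * qgf) :
    (lEval α g = 0 → qgf = qg * f) ∧
    (lEval α g ≠ 0 → ∀ qf : F[X],
      f = C (lEval ((lEval α g)⁻¹ * α * lEval α g) f)
        + (X - C ((lEval α g)⁻¹ * α * lEval α g)) * qf →
      qgf = qg * f + C (lEval α g) * qf) := by
  rw [← divByMonic_X_sub_C_eq_of_eq_C_add hgf]
  constructor
  · intro h0
    refine divByMonic_X_sub_C_eq_of_eq_C_add (a := 0) ?_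
    conv_lhs => rw [hg, h0]
    rw [C_0, zero_add, zero_add, mul_assoc]
  · intro hne qf hf
    have hconj : SemiconjBy (lEval α g) ((lEval α g)⁻¹ * α * lEval α g) α := by
      rw [SemiconjBy, ← mul_assoc, ← mul_assoc, mul_inv_cancel₀ hne, one_mul]
    exact divByMonic_X_sub_C_eq_of_eq_C_add (mul_eq_C_add_X_sub_C_mul hg hf hconj)
end

section
/- Let F be a division ring, α ∈ F algebraic over the center with minimal central polynomial χ, and β ∈ F with χ(β) ≠ 0 (i.e., β not conjugate to α). Then for every γ ∈ F, the Sylvester equation αx − xβ = γ has the unique solution x = −((L_α χ)·γ)^r(β)·χ(β)⁻¹. -/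
open Polynomial

/-- χ is the minimal central polynomial of α: monic with central coefficients,
vanishing at α, of least degree among such. -/
def IsMinCentralPoly {F : Type*} [DivisionRing F] (α : F) (χ : F[X]) : Prop :=
  χ.Monic ∧ (∀ n, χ.coeff n ∈ Subring.center F) ∧ χ.eval α = 0 ∧
    ∀ g : F[X], g.Monic → (∀ n, g.coeff n ∈ Subring.center F) → g.eval α = 0 →
      χ.degree ≤ g.degree

/-!
Since χ has central coefficients, left and right evaluation agree, so `χ(α) = 0` gives
`χ = (z - α) q`; moreover any `d` with `d β = α d` satisfies `d χ(β) = χ(α) d = 0`, so the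
Sylvester operator `x ↦ α x - x β` is injective when `χ(β) ≠ 0`. Multiplying
`(χ · γ)(β) = γ χ(β)` out through the factorization gives `γ χ(β) = P β - α P` with
`P = (q · γ)(β)`, and as `χ(β)` commutes with `β`, `x = -P χ(β)⁻¹` is a solution.
-/

namespace Polynomial

section Ring

variable {F : Type*} [Ring F] {f : F[X]}

theorem commute_C_of_coeff_mem_center (hf : ∀ n, f.coeff n ∈ Subring.center F) (a : F) :
    Commute (C a) f := by
  ext n
  rw [coeff_C_mul, coeff_mul_C, Subring.mem_center_iff.mp (hf n) a]

theorem semiconjBy_eval_of_coeff_mem_center (hf : ∀ n, f.coeff n ∈ Subring.center F)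
    {d x y : F} (h : SemiconjBy d x y) : SemiconjBy d (f.eval x) (f.eval y) := by
  rw [SemiconjBy, eval_eq_sum_range, eval_eq_sum_range, Finset.mul_sum, Finset.sum_mul]
  refine Finset.sum_congr rfl fun i _ => ?_
  have hc : SemiconjBy d (f.coeff i) (f.coeff i) := Subring.mem_center_iff.mp (hf i) d
  exact (hc.mul_right (h.pow_right i)).eq

theorem eq_zero_of_semiconjBy_of_eval_eq_zero (hf : ∀ n, f.coeff n ∈ Subring.center F)
    [NoZeroDivisors F] {d α β : F} (hd : SemiconjBy d β α) (hα : f.eval α = 0)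
    (hβ : f.eval β ≠ 0) : d = 0 := by
  have h := (semiconjBy_eval_of_coeff_mem_center hf hd).eq
  rw [hα, zero_mul] at h
  exact (mul_eq_zero.mp h).resolve_right hβ

theorem mul_eval_eq_of_eq_X_sub_C_mul (hf : ∀ n, f.coeff n ∈ Subring.center F) {α : F}
    {q : F[X]} (hq : f = (X - C α) * q) (β γ : F) :
    γ * f.eval β = (q * C γ).eval β * β - α * (q * C γ).eval β := by
  rw [← eval_C_mul, (commute_C_of_coeff_mem_center hf γ).eq, hq, mul_assoc, sub_mul, eval_sub,
    X_mul, eval_mul_X, eval_C_mul]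

end Ring

section DivisionRing

variable {F : Type*} [DivisionRing F] {f : F[X]}

theorem lEval_eq_eval_of_coeff_mem_center (hf : ∀ n, f.coeff n ∈ Subring.center F) (a : F) :
    lEval a f = f.eval a := by
  rw [lEval, eval_eq_sum]
  exact Finset.sum_congr rfl fun i _ => Subring.mem_center_iff.mp (hf i) (a ^ i)

theorem eq_of_mul_sub_mul_eq (hf : ∀ n, f.coeff n ∈ Subring.center F) {α β x y : F}
    (hα : f.eval α = 0) (hβ : f.eval β ≠ 0) (h : α * x - x * β = α * y - y * β) : x = y := by
  refine sub_eq_zero.mp (eq_zero_of_semiconjBy_of_eval_eq_zero hf ?_ hα hβ)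
  rw [SemiconjBy, eq_comm, ← sub_eq_zero, ← sub_eq_zero.mpr h]
  noncomm_ring

theorem mul_sub_mul_eq_of_eq_X_sub_C_mul (hf : ∀ n, f.coeff n ∈ Subring.center F) {α β : F}
    {q : F[X]} (hq : f = (X - C α) * q) (hβ : f.eval β ≠ 0) (γ : F) :
    α * (-(q * C γ).eval β * (f.eval β)⁻¹) - -(q * C γ).eval β * (f.eval β)⁻¹ * β = γ := by
  set P := (q * C γ).eval β
  have hcomm : Commute β (f.eval β)⁻¹ :=
    Commute.inv_right₀ (semiconjBy_eval_of_coeff_mem_center hf (Commute.refl β))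
  calc α * (-P * (f.eval β)⁻¹) - -P * (f.eval β)⁻¹ * β
      = (P * β - α * P) * (f.eval β)⁻¹ := by rw [mul_assoc (-P), ← hcomm.eq]; noncomm_ring
    _ = γ := by rw [← mul_eval_eq_of_eq_X_sub_C_mul hf hq, mul_inv_cancel_right₀ hβ]

end DivisionRing

end Polynomial

/-- If χ(β) ≠ 0 (β not conjugate to α), the Sylvester equation αx − xβ = γ has the
unique solution x = −((L_α χ)·γ)^r(β)·χ(β)⁻¹. -/
theorem stmt14 {F : Type*} [DivisionRing F] (α β γ : F) (χ : F[X])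
    (hχ : IsMinCentralPoly α χ) (hβ : χ.eval β ≠ 0)
    (q : F[X]) (hq : χ = C (lEval α χ) + (X - C α) * q) :
    ∀ x : F, α * x - x * β = γ ↔ x = -((q * C γ).eval β) * (χ.eval β)⁻¹ := by
  obtain ⟨-, hc, hα, -⟩ := hχ
  have hfac : χ = (X - C α) * q := by
    rwa [lEval_eq_eval_of_coeff_mem_center hc, hα, C_0, zero_add] at hq
  have hsol := mul_sub_mul_eq_of_eq_X_sub_C_mul hc hfac hβ γ
  intro x
  constructor
  · intro h
    exact eq_of_mul_sub_mul_eq hc hα hβ (h.trans hsol.symm)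
  · rintro rfl
    exact hsol
end

section
/- Let F be a division ring and h ∈ F[z] a bounded polynomial with least central multiple M_h = h·h^◇ ∈ Z(F)[z], and let β ∈ F with M_h(β) ≠ 0. Then for nonzero d, δ ∈ F: d = (h·δ)^r(β) if and only if δ = (h^◇·d)^r(β)·M_h(β)⁻¹. -/
open Polynomial

/-!
Write `φ_p(e) = (p·e)^r(β)`. Right evaluation satisfies the product rule
`(pq)^r(β) = (p·q^r(β))^r(β)`, so `φ_p ∘ φ_q = φ_{pq}`; and since `M` has central
coefficients, `φ_M(e) = e·M(β)`. Hence `φ_{h^◇} ∘ φ_h` and `φ_h ∘ φ_{h^◇}` are both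
right multiplication by the unit `M(β)`, so `φ_h` and `φ_{h^◇}` are mutually inverse up
to that factor.
-/

namespace Polynomial

variable {R : Type*} [Ring R]

theorem eval_mul_eq_eval_mul_C_eval (x : R) (p q : R[X]) :
    (p * q).eval x = (p * C (q.eval x)).eval x := by
  induction p using Polynomial.induction_on' with
  | add f g hf hg => simp only [add_mul, eval_add, hf, hg]
  | monomial n a =>
    have eval_monomial_mul : ∀ r : R[X], (monomial n a * r).eval x = a * (r.eval x * x ^ n) := by
      intro r
      rw [← C_mul_X_pow_eq_monomial, mul_assoc, X_pow_mul, ← mul_assoc, eval_mul_X_pow,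
        eval_C_mul, mul_assoc]
    rw [eval_monomial_mul, eval_monomial_mul, eval_C]

theorem mul_C_eq_C_mul_of_coeff_mem_center {M : R[X]} (hM : ∀ n, M.coeff n ∈ Subring.center R)
    (a : R) : M * C a = C a * M := by
  ext n
  rw [coeff_mul_C, coeff_C_mul]
  exact (Subring.mem_center_iff.mp (hM n) a).symm

theorem eval_mul_C_of_coeff_mem_center {M : R[X]} (hM : ∀ n, M.coeff n ∈ Subring.center R)
    (x a : R) : (M * C a).eval x = a * M.eval x := by
  rw [mul_C_eq_C_mul_of_coeff_mem_center hM, eval_C_mul]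

variable {M p q : R[X]}

theorem eval_mul_C_eval_mul_C (hM : ∀ n, M.coeff n ∈ Subring.center R) (hpq : M = p * q)
    (x e : R) : (p * C ((q * C e).eval x)).eval x = e * M.eval x := by
  rw [← eval_mul_eq_eval_mul_C_eval, ← mul_assoc, ← hpq, eval_mul_C_of_coeff_mem_center hM]

theorem injective_eval_mul_C [NoZeroDivisors R] (hM : ∀ n, M.coeff n ∈ Subring.center R)
    (hpq : M = p * q) {x : R} (hx : M.eval x ≠ 0) :
    Function.Injective fun e => (q * C e).eval x := by
  intro e₁ e₂ heq
  have hzero : (q * C (e₁ - e₂)).eval x = 0 := by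
    rw [C_sub, mul_sub, eval_sub, sub_eq_zero]
    exact heq
  have : (e₁ - e₂) * M.eval x = 0 := by
    rw [← eval_mul_C_eval_mul_C hM hpq, hzero, C_0, mul_zero, eval_zero]
  exact sub_eq_zero.mp ((mul_eq_zero.mp this).resolve_right hx)

end Polynomial

theorem stmt17_general {F : Type*} [DivisionRing F] (h hd M : F[X]) (β : F)
    (hMc : ∀ n, M.coeff n ∈ Subring.center F)
    (h1 : M = h * hd) (h2 : M = hd * h)
    (hβ : M.eval β ≠ 0) (d δ : F) :
    d = (h * C δ).eval β ↔ δ = (hd * C d).eval β * (M.eval β)⁻¹ := by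
  constructor
  · rintro rfl
    rw [eval_mul_C_eval_mul_C hMc h2, mul_inv_cancel_right₀ hβ]
  · intro hδ
    refine (injective_eval_mul_C hMc h1 hβ ?_).symm
    dsimp only
    rw [eval_mul_C_eval_mul_C hMc h2, hδ, inv_mul_cancel_right₀ hβ]

/-- Inversion of the right λ-transform: for a bounded polynomial h with least
central multiple M = h·h^◇ and M(β) ≠ 0, for nonzero d, δ:
d = (h·δ)^r(β) ↔ δ = (h^◇·d)^r(β)·M(β)⁻¹. -/
theorem stmt17 {F : Type*} [DivisionRing F] (h hd M : F[X]) (β : F)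
    (hMc : ∀ n, M.coeff n ∈ Subring.center F)
    (h1 : M = h * hd) (h2 : M = hd * h)
    (hleast : ∀ N : F[X], (∀ n, N.coeff n ∈ Subring.center F) →
      (∃ g : F[X], N = h * g) → ∃ g : F[X], N = M * g)
    (hβ : M.eval β ≠ 0) (d δ : F) (hd0 : d ≠ 0) (hδ0 : δ ≠ 0) :
    d = (h * C δ).eval β ↔ δ = (hd * C d).eval β * (M.eval β)⁻¹ :=
  stmt17_general h hd M β hMc h1 h2 hβ d δ
end

section
/- Let H be the real quaternions and let γ₁, γ₂, γ be in the same conjugacy class with γ₁ ≠ γ₂. Then for every polynomial f ∈ H[z], f^ℓ(γ) = (γ−γ₂)(γ₁−γ₂)⁻¹ f^ℓ(γ₁) + (γ−γ₁)(γ₂−γ₁)⁻¹ f^ℓ(γ₂). -/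
/-!
Every quaternion `q` satisfies `q² = 2 Re(q) q - |q|²`, and this real quadratic relation is
invariant under conjugation, so `γ₁`, `γ₂` and `γ` are roots of one and the same real
quadratic. The two Lagrange coefficients `L`, `M` of the statement satisfy `L + M = 1` and
`L γ₁ + M γ₂ = γ` in any division ring; because the quadratic has central coefficients, the
relation `γʲ = L γ₁ʲ + M γ₂ʲ` then propagates from `j = 0, 1` to all `j` by the two-term
recurrence `xʲ⁺² = t xʲ⁺¹ - n xʲ`. Left evaluation is right-linear in the coefficients, which
gives the formula for every polynomial.
-/

open Polynomial

section QuadraticRelation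

variable {R A : Type*} [CommRing R] [Ring A] [Algebra R A] {t n : R}

theorem pow_add_two_of_sq_eq {x : A} (hx : x ^ 2 = t • x - n • 1) (j : ℕ) :
    x ^ (j + 2) = t • x ^ (j + 1) - n • x ^ j := by
  rw [pow_add, hx, mul_sub, mul_smul_comm, mul_smul_comm, mul_one, ← pow_succ]

theorem IsConj.sq_eq_smul_sub_smul_one {x y : A} (hxy : IsConj x y)
    (hx : x ^ 2 = t • x - n • 1) : y ^ 2 = t • y - n • 1 := by
  obtain ⟨c, hc⟩ := hxy
  refine c.mul_left_inj.1 ?_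
  calc y ^ 2 * c = c * x ^ 2 := (hc.pow_right 2).eq.symm
    _ = t • (c * x) - n • (c : A) := by rw [hx, mul_sub, mul_smul_comm, mul_smul_comm, mul_one]
    _ = (t • y - n • 1) * c := by rw [hc.eq, sub_mul, smul_mul_assoc, smul_mul_assoc, one_mul]

theorem pow_eq_mul_pow_add_mul_pow {x y z a b : A} (hx : x ^ 2 = t • x - n • 1)
    (hy : y ^ 2 = t • y - n • 1) (hz : z ^ 2 = t • z - n • 1) (hab : a + b = 1)
    (hz1 : a * x + b * y = z) (j : ℕ) : z ^ j = a * x ^ j + b * y ^ j := by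
  induction j using Nat.twoStepInduction with
  | zero => simp [hab]
  | one => simp [hz1]
  | more j ih₀ ih₁ =>
    rw [pow_add_two_of_sq_eq hx, pow_add_two_of_sq_eq hy, pow_add_two_of_sq_eq hz, ih₀, ih₁]
    simp only [mul_sub, mul_smul_comm, smul_add]
    abel

end QuadraticRelation

theorem Quaternion.sq_eq_two_re_smul_sub (q : Quaternion ℝ) :
    q ^ 2 = (2 * q.re) • q - Quaternion.normSq q • 1 := by
  have h := Quaternion.star_mul_self q
  rw [Quaternion.star_eq_two_re_sub, sub_mul, Quaternion.coe_mul_eq_smul] at h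
  rw [sq, ← Quaternion.coe_one, Quaternion.smul_coe, mul_one, ← h]
  abel

section DivisionRing

variable {F : Type*} [DivisionRing F]

theorem lagrange_two_point_coeffs_sum_eq_one {x y : F} (hxy : x ≠ y) (z : F) :
    (z - y) * (x - y)⁻¹ + (z - x) * (y - x)⁻¹ = 1 := by
  have hd : x - y ≠ 0 := sub_ne_zero.2 hxy
  rw [← neg_sub x y, inv_neg, mul_neg, ← sub_eq_add_neg, ← sub_mul, sub_sub_sub_cancel_left,
    mul_inv_cancel₀ hd]

theorem lagrange_two_point_interpolates {x y : F} (hxy : x ≠ y) (z : F) :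
    (z - y) * (x - y)⁻¹ * x + (z - x) * (y - x)⁻¹ * y = z := by
  have hd : x - y ≠ 0 := sub_ne_zero.2 hxy
  rw [← neg_sub x y, inv_neg, mul_neg, neg_mul, ← sub_eq_add_neg,
    show z - y = (z - x) + (x - y) by abel, add_mul, mul_inv_cancel₀ hd, add_mul, one_mul,
    add_sub_right_comm, mul_assoc, mul_assoc, ← mul_sub, ← mul_sub, inv_mul_cancel₀ hd, mul_one,
    sub_add_cancel]

theorem lEval_eq_of_pow_eq {x y z a b : F} (h : ∀ j : ℕ, z ^ j = a * x ^ j + b * y ^ j)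
    (f : F[X]) : lEval z f = a * lEval x f + b * lEval y f := by
  simp only [lEval, Polynomial.sum_def, Finset.mul_sum, ← Finset.sum_add_distrib, h, add_mul,
    mul_assoc]

end DivisionRing

/-- Two-point left Lagrange formula in the quaternions: for γ₁ ≠ γ₂ and γ all in
the same conjugacy class,
f^ℓ(γ) = (γ−γ₂)(γ₁−γ₂)⁻¹ f^ℓ(γ₁) + (γ−γ₁)(γ₂−γ₁)⁻¹ f^ℓ(γ₂). -/
theorem stmt19 (γ₁ γ₂ γ : Quaternion ℝ) (hne : γ₁ ≠ γ₂)
    (h2 : ∃ h : Quaternion ℝ, h ≠ 0 ∧ γ₂ = h * γ₁ * h⁻¹)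
    (hγ : ∃ h : Quaternion ℝ, h ≠ 0 ∧ γ = h * γ₁ * h⁻¹)
    (f : Polynomial (Quaternion ℝ)) :
    lEval γ f = (γ - γ₂) * (γ₁ - γ₂)⁻¹ * lEval γ₁ f
      + (γ - γ₁) * (γ₂ - γ₁)⁻¹ * lEval γ₂ f := by
  obtain ⟨h, hh, rfl⟩ := h2
  obtain ⟨k, hk, rfl⟩ := hγ
  have hsq₁ := Quaternion.sq_eq_two_re_smul_sub γ₁
  have hsq₂ := (GroupWithZero.isConj_iff₀.2 ⟨h, hh, rfl⟩).sq_eq_smul_sub_smul_one hsq₁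
  have hsq := (GroupWithZero.isConj_iff₀.2 ⟨k, hk, rfl⟩).sq_eq_smul_sub_smul_one hsq₁
  exact lEval_eq_of_pow_eq (pow_eq_mul_pow_add_mul_pow hsq₁ hsq₂ hsq
    (lagrange_two_point_coeffs_sum_eq_one hne _) (lagrange_two_point_interpolates hne _)) f
end
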